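/- Soundness of algorithmic typing: if the algorithmic inference judgment Γ ⊢ a ↑ T | e ⇝ M or the algorithmic checking judgment Γ ⊢ a ↓ T | e ⇝ M holds for a surface expression a, then the declarative typing judgment Γ ⊢ M : T | e holds for the elaborated internal expression M. -/
import Mathlib


set_option autoImplicit false
set_option linter.unusedVariables false

namespace LawOrder

/-! ## Graph representations -/

structure Graph (B : Type) where
  n : ℕ
  label : ℕ → B
  edge : ℕ → ℕ → Prop
  edge_lt : ∀ i j, edge i j → i < n ∧ j < n

namespace Graph

variable {B : Type}

/-- The edge relation is acyclic. -/
def Acyclic (G : Graph B) : Prop := ∀ i, ¬ Relation.TransGen G.edge i i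

/-- The empty graph representation. -/
def zero (B : Type) [Inhabited B] : Graph B :=
  ⟨0, fun _ => default, fun _ _ => False, fun _ _ h => h.elim⟩

/-- Union of two graph representations: disjoint union, second part shifted. -/
def union (G₁ G₂ : Graph B) : Graph B where
  n := G₁.n + G₂.n
  label := fun i => if i < G₁.n then G₁.label i else G₂.label (i - G₁.n)
  edge := fun i j =>
    G₁.edge i j ∨ (G₁.n ≤ i ∧ G₁.n ≤ j ∧ G₂.edge (i - G₁.n) (j - G₁.n))
  edge_lt := by
    intro i j h
    rcases h with h | ⟨hi, hj, h⟩
    · have := G₁.edge_lt i j h; omega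
    · have := G₂.edge_lt _ _ h; omega

/-- Join of two graph representations: union plus all edges from the first
    part to the second part. -/
def join (G₁ G₂ : Graph B) : Graph B where
  n := G₁.n + G₂.n
  label := fun i => if i < G₁.n then G₁.label i else G₂.label (i - G₁.n)
  edge := fun i j =>
    G₁.edge i j ∨ (G₁.n ≤ i ∧ G₁.n ≤ j ∧ G₂.edge (i - G₁.n) (j - G₁.n)) ∨
      (i < G₁.n ∧ G₁.n ≤ j ∧ j < G₁.n + G₂.n)
  edge_lt := by
    intro i j h
    rcases h with h | ⟨hi, hj, h⟩ | ⟨hi, hj₁, hj₂⟩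
    · have := G₁.edge_lt i j h; omega
    · have := G₂.edge_lt _ _ h; omega
    · omega

/-- Isomorphism of graph representations. -/
def Iso (G₁ G₂ : Graph B) : Prop :=
  G₁.n = G₂.n ∧ ∃ f : Fin G₁.n → Fin G₁.n, Function.Bijective f ∧
    (∀ i j : Fin G₁.n, G₁.edge (f i).val (f j).val ↔ G₂.edge i.val j.val) ∧
    (∀ i : Fin G₁.n, G₁.label (f i).val = G₂.label i.val)

/-- `G₁` is a spanning graph representation of `G₂`: same vertices and labels,
    and the edges of `G₁` are contained in those of `G₂`. -/
def Spanning (G₁ G₂ : Graph B) : Prop :=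
  G₁.n = G₂.n ∧ (∀ i, i < G₁.n → G₁.label i = G₂.label i) ∧
    ∀ i j, G₁.edge i j → G₂.edge i j

/-- `f` is a topological ordering of `G`: `f` enumerates the vertices so that
    edges always point forward. -/
def IsTopOrder (G : Graph B) (f : Equiv.Perm (Fin G.n)) : Prop :=
  ∀ i j : Fin G.n, G.edge i.val j.val → f.symm i < f.symm j

/-- `G` has exactly one topological ordering. -/
def Traceable (G : Graph B) : Prop :=
  ∃! f : Equiv.Perm (Fin G.n), G.IsTopOrder f

/-- The identity enumeration is a topological ordering: all edges increase. -/
def TopOrdered (G : Graph B) : Prop := ∀ i j, G.edge i j → i < j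

/-- `k` is a union cut of `G`: no edge crosses from below `k` to `k` or above. -/
def UnionCut (G : Graph B) (k : ℕ) : Prop :=
  0 < k ∧ k < G.n ∧ ∀ i j, i < k → k ≤ j → ¬ G.edge i j

/-- `k` is a join cut of `G`: every pair crossing from below `k` to `k` or
    above (within range) is an edge. -/
def JoinCut (G : Graph B) (k : ℕ) : Prop :=
  0 < k ∧ k < G.n ∧ ∀ i j, i < k → k ≤ j → j < G.n → G.edge i j

/-- Lower part of the index cut at `k`. -/
def cutLo (G : Graph B) (k : ℕ) : Graph B where
  n := k
  label := G.label
  edge := fun i j => G.edge i j ∧ i < k ∧ j < k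
  edge_lt := fun i j h => ⟨h.2.1, h.2.2⟩

/-- Upper part of the index cut at `k` (re-indexed from 0). -/
def cutHi (G : Graph B) (k : ℕ) : Graph B where
  n := G.n - k
  label := fun i => G.label (i + k)
  edge := fun i j => G.edge (i + k) (j + k)
  edge_lt := by
    intro i j h
    have := G.edge_lt _ _ h
    omega

/-- Weak connectedness: any two vertices are joined by an undirected path. -/
def WeaklyConnected (G : Graph B) : Prop :=
  ∀ i j, i < G.n → j < G.n →
    Relation.ReflTransGen (fun a b => G.edge a b ∨ G.edge b a) i j

/-- Union of a nonempty sequence of graph representations. -/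
def unionList (G : Graph B) (L : List (Graph B)) : Graph B :=
  L.foldl union G

end Graph

/-! ## Contexts built from bindings with ordered and unordered composition -/

inductive GCtx (B : Type) where
  | empty : GCtx B
  | bind : B → GCtx B
  | comma : GCtx B → GCtx B → GCtx B
  | par : GCtx B → GCtx B → GCtx B

/-- Context patterns: contexts with a single hole. -/
inductive GPat (B : Type) where
  | hole : GPat B
  | commaL : GPat B → GCtx B → GPat B
  | commaR : GCtx B → GPat B → GPat B
  | parL : GPat B → GCtx B → GPat B
  | parR : GCtx B → GPat B → GPat B

def GPat.fill {B : Type} : GPat B → GCtx B → GCtx B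
  | .hole, Γ => Γ
  | .commaL G Δ, Γ => .comma (G.fill Γ) Δ
  | .commaR Δ G, Γ => .comma Δ (G.fill Γ)
  | .parL G Δ, Γ => .par (G.fill Γ) Δ
  | .parR Δ G, Γ => .par Δ (G.fill Γ)

def GCtx.toList {B : Type} : GCtx B → List B
  | .empty => []
  | .bind b => [b]
  | .comma Γ₁ Γ₂ => Γ₁.toList ++ Γ₂.toList
  | .par Γ₁ Γ₂ => Γ₁.toList ++ Γ₂.toList

/-- Graph part of the interpretation of a context: unrestricted bindings
    contribute no vertex, ordered bindings one vertex; `comma` is join,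
    `par` is union. -/
def GCtx.interpG {B : Type} [Inhabited B] (unr : B → Bool) : GCtx B → Graph B
  | .empty => Graph.zero B
  | .bind b =>
      if unr b then Graph.zero B
      else ⟨1, fun _ => b, fun _ _ => False, fun _ _ h => h.elim⟩
  | .comma Γ₁ Γ₂ => (interpG unr Γ₁).join (interpG unr Γ₂)
  | .par Γ₁ Γ₂ => (interpG unr Γ₁).union (interpG unr Γ₂)

/-- Set part of the interpretation of a context: the set of its
    unrestricted bindings. -/
def GCtx.unrSet {B : Type} (unr : B → Bool) : GCtx B → Set B
  | .empty => ∅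
  | .bind b => if unr b then {b} else ∅
  | .comma Γ₁ Γ₂ => unrSet unr Γ₁ ∪ unrSet unr Γ₂
  | .par Γ₁ Γ₂ => unrSet unr Γ₁ ∪ unrSet unr Γ₂

/-! ## Ordered partial monoids -/

structure OPM (α : Type) where
  mul : α → α → Option α
  eps : α
  le : α → α → Prop
  le_refl : ∀ a, le a a
  le_trans : ∀ a b c, le a b → le b c → le a c
  eps_mul : ∀ a, mul eps a = some a
  mul_eps : ∀ a, mul a eps = some a
  mul_assoc : ∀ a b c,
    (mul a b).bind (fun x => mul x c) = (mul b c).bind (fun x => mul a x)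
  mul_mono : ∀ a a' b b' c', le a a' → le b b' → mul a' b' = some c' →
    ∃ c, mul a b = some c ∧ le c c'

/-- `P.mulLe a b c` means `a ⊙ b` is defined and `a ⊙ b ≤ c`. -/
def OPM.mulLe {α : Type} (P : OPM α) (a b c : α) : Prop :=
  ∃ r, P.mul a b = some r ∧ P.le r c

/-! ## Types and effects (effects are booleans: `false` = 0, `true` = 1) -/

inductive Ty (α : Type) where
  | unit : Ty α
  | res : α → Ty α
  | arrow : Ty α → Bool → Ty α → Ty α
  | uarrow : Ty α → Bool → Ty α → Ty α
  | rarrow : Ty α → Bool → Ty α → Ty α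
  | larrow : Ty α → Bool → Ty α → Ty α
  | uprod : Ty α → Ty α → Ty α
  | oprod : Ty α → Ty α → Ty α

def Ty.unrB {α : Type} : Ty α → Bool
  | .unit => true
  | .res _ => false
  | .arrow _ _ _ => true
  | .uarrow _ _ _ => false
  | .rarrow _ _ _ => false
  | .larrow _ _ _ => false
  | .uprod S T => S.unrB && T.unrB
  | .oprod S T => S.unrB && T.unrB

/-- Unrestricted types. -/
def Ty.Unr {α : Type} (T : Ty α) : Prop := T.unrB = true

/-- Ordered types. -/
def Ty.Ord {α : Type} (T : Ty α) : Prop := T.unrB = false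

/-! ## Bindings and typing contexts -/

inductive Binding (α : Type) where
  | var : ℕ → Ty α → Binding α
  | loc : ℕ → α → Binding α

instance {α : Type} : Inhabited (Binding α) := ⟨Binding.var 0 Ty.unit⟩

def Binding.unrB {α : Type} : Binding α → Bool
  | .var _ T => T.unrB
  | .loc _ _ => false

abbrev Ctx (α : Type) := GCtx (Binding α)
abbrev CtxPat (α : Type) := GPat (Binding α)

/-- Graph part of the interpretation of a typing context. -/
def interpC {α : Type} (Γ : Ctx α) : Graph (Binding α) :=
  GCtx.interpG Binding.unrB Γ

/-- Set part of the interpretation of a typing context. -/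
def unrSetC {α : Type} (Γ : Ctx α) : Set (Binding α) :=
  GCtx.unrSet Binding.unrB Γ

/-- Subcontext relation `Γ₁ ≲ Γ₂`: up to isomorphism on both sides, the graph
    of `Γ₁` is a spanning subgraph of the graph of `Γ₂`, and the unrestricted
    set of `Γ₂` is contained in that of `Γ₁`. -/
def SubC {α : Type} (Γ₁ Γ₂ : Ctx α) : Prop :=
  (∃ G₁ G₂ : Graph (Binding α),
      Graph.Iso (interpC Γ₁) G₁ ∧ Graph.Spanning G₁ G₂ ∧ Graph.Iso G₂ (interpC Γ₂)) ∧
    unrSetC Γ₂ ⊆ unrSetC Γ₁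

def vdom {α : Type} (Γ : Ctx α) : Set ℕ :=
  {x | ∃ T, Binding.var x T ∈ GCtx.toList Γ}

def ldom {α : Type} (Γ : Ctx α) : Set ℕ :=
  {l | ∃ m, Binding.loc l m ∈ GCtx.toList Γ}

/-- All bindings of the context are unrestricted. -/
def isUnrCtx {α : Type} (Γ : Ctx α) : Prop :=
  ∀ b ∈ GCtx.toList Γ, Binding.unrB b = true

/-- Run-time contexts contain only location bindings. -/
def isRuntime {α : Type} (Γ : Ctx α) : Prop :=
  ∀ b ∈ GCtx.toList Γ, ∃ l m, b = Binding.loc l m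

/-! ## Expressions -/

inductive Const (α : Type) where
  | unit : Const α
  | new : α → Const α
  | op : α → Const α
  | split : α → α → Const α
  | drop : Const α

inductive Expr (α : Type) where
  | const : Const α → Expr α
  | loc : ℕ → Expr α
  | var : ℕ → Expr α
  | abs : ℕ → Expr α → Expr α
  | uabs : ℕ → Expr α → Expr α
  | rabs : ℕ → Expr α → Expr α
  | labs : ℕ → Expr α → Expr α
  | app : Expr α → Expr α → Expr α
  | uapp : Expr α → Expr α → Expr α
  | rapp : Expr α → Expr α → Expr α
  | lapp : Expr α → Expr α → Expr α
  | upair : Expr α → Expr α → Expr α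
  | opair : Expr α → Expr α → Expr α
  | ulet : ℕ → ℕ → Expr α → Expr α → Expr α
  | olet : ℕ → ℕ → Expr α → Expr α → Expr α

inductive IsValue {α : Type} : Expr α → Prop where
  | const : ∀ c : Const α, IsValue (Expr.const c)
  | loc : ∀ l : ℕ, IsValue (Expr.loc l)
  | abs : ∀ (x : ℕ) (M : Expr α), IsValue (Expr.abs x M)
  | uabs : ∀ (x : ℕ) (M : Expr α), IsValue (Expr.uabs x M)
  | rabs : ∀ (x : ℕ) (M : Expr α), IsValue (Expr.rabs x M)
  | labs : ∀ (x : ℕ) (M : Expr α), IsValue (Expr.labs x M)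
  | upair : ∀ V₁ V₂ : Expr α, IsValue V₁ → IsValue V₂ → IsValue (Expr.upair V₁ V₂)
  | opair : ∀ V₁ V₂ : Expr α, IsValue V₁ → IsValue V₂ → IsValue (Expr.opair V₁ V₂)

/-- Substitution `M[V/x]` (values substituted at run time are closed, so
    no capture can occur). -/
def subst {α : Type} : Expr α → Expr α → ℕ → Expr α
  | Expr.const c, _, _ => Expr.const c
  | Expr.loc l, _, _ => Expr.loc l
  | Expr.var y, V, x => if y = x then V else Expr.var y
  | Expr.abs y N, V, x => Expr.abs y (if y = x then N else subst N V x)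
  | Expr.uabs y N, V, x => Expr.uabs y (if y = x then N else subst N V x)
  | Expr.rabs y N, V, x => Expr.rabs y (if y = x then N else subst N V x)
  | Expr.labs y N, V, x => Expr.labs y (if y = x then N else subst N V x)
  | Expr.app M N, V, x => Expr.app (subst M V x) (subst N V x)
  | Expr.uapp M N, V, x => Expr.uapp (subst M V x) (subst N V x)
  | Expr.rapp M N, V, x => Expr.rapp (subst M V x) (subst N V x)
  | Expr.lapp M N, V, x => Expr.lapp (subst M V x) (subst N V x)
  | Expr.upair M N, V, x => Expr.upair (subst M V x) (subst N V x)
  | Expr.opair M N, V, x => Expr.opair (subst M V x) (subst N V x)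
  | Expr.ulet y z M N, V, x =>
      Expr.ulet y z (subst M V x) (if y = x ∨ z = x then N else subst N V x)
  | Expr.olet y z M N, V, x =>
      Expr.olet y z (subst M V x) (if y = x ∨ z = x then N else subst N V x)

/-! ## Typing (Fig. 7) -/

inductive Typing {α : Type} (P : OPM α) : Ctx α → Expr α → Ty α → Bool → Prop where
  | unit : Typing P GCtx.empty (Expr.const Const.unit) Ty.unit false
  | new : ∀ m : α,
      Typing P GCtx.empty (Expr.const (Const.new m))
        (Ty.arrow Ty.unit false (Ty.res m)) false
  | op : ∀ m₀ m₁ m₂ : α, P.mulLe m₁ m₂ m₀ →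
      Typing P GCtx.empty (Expr.const (Const.op m₁))
        (Ty.arrow (Ty.res m₀) true (Ty.res m₂)) false
  | split : ∀ m₀ m₁ m₂ : α, P.mulLe m₁ m₂ m₀ →
      Typing P GCtx.empty (Expr.const (Const.split m₁ m₂))
        (Ty.arrow (Ty.res m₀) false (Ty.oprod (Ty.res m₁) (Ty.res m₂))) false
  | drop : ∀ m : α, P.le P.eps m →
      Typing P GCtx.empty (Expr.const Const.drop)
        (Ty.arrow (Ty.res m) false Ty.unit) false
  | var : ∀ (x : ℕ) (T : Ty α),
      Typing P (GCtx.bind (Binding.var x T)) (Expr.var x) T false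
  | loc : ∀ (l : ℕ) (m : α),
      Typing P (GCtx.bind (Binding.loc l m)) (Expr.loc l) (Ty.res m) false
  | abs : ∀ (Γ : Ctx α) (x : ℕ) (S T : Ty α) (M : Expr α) (e : Bool),
      x ∉ vdom Γ → isUnrCtx Γ →
      Typing P (GCtx.comma Γ (GCtx.bind (Binding.var x S))) M T e →
      Typing P Γ (Expr.abs x M) (Ty.arrow S e T) false
  | uabs : ∀ (Γ : Ctx α) (x : ℕ) (S T : Ty α) (M : Expr α) (e : Bool),
      x ∉ vdom Γ →
      Typing P (GCtx.par Γ (GCtx.bind (Binding.var x S))) M T e →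
      Typing P Γ (Expr.uabs x M) (Ty.uarrow S e T) false
  | rabs : ∀ (Γ : Ctx α) (x : ℕ) (S T : Ty α) (M : Expr α) (e : Bool),
      x ∉ vdom Γ →
      Typing P (GCtx.comma Γ (GCtx.bind (Binding.var x S))) M T e →
      Typing P Γ (Expr.rabs x M) (Ty.rarrow S e T) false
  | labs : ∀ (Γ : Ctx α) (x : ℕ) (S T : Ty α) (M : Expr α) (e : Bool),
      x ∉ vdom Γ →
      Typing P (GCtx.comma (GCtx.bind (Binding.var x S)) Γ) M T e →
      Typing P Γ (Expr.labs x M) (Ty.larrow S e T) false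
  | app : ∀ (Γ₁ Γ₂ : Ctx α) (M N : Expr α) (S T : Ty α) (e e₁ e₂ : Bool),
      Typing P Γ₁ M (Ty.arrow S e T) e₁ → Typing P Γ₂ N S e₂ →
      Typing P (GCtx.comma Γ₁ Γ₂) (Expr.app M N) T (e || e₁ || e₂)
  | uapp : ∀ (Γ₁ Γ₂ : Ctx α) (M N : Expr α) (S T : Ty α) (e e₁ e₂ : Bool),
      Typing P Γ₁ M (Ty.uarrow S e T) e₁ → Typing P Γ₂ N S e₂ →
      Typing P (GCtx.par Γ₁ Γ₂) (Expr.uapp M N) T (e || e₁ || e₂)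
  | rapp : ∀ (Γ₁ Γ₂ : Ctx α) (M N : Expr α) (S T : Ty α) (e e₁ : Bool),
      Typing P Γ₁ M (Ty.rarrow S e T) e₁ → Typing P Γ₂ N S false →
      Typing P (GCtx.comma Γ₁ Γ₂) (Expr.rapp M N) T (e || e₁)
  | lapp : ∀ (Γ₁ Γ₂ : Ctx α) (M N : Expr α) (S T : Ty α) (e e₂ : Bool),
      Typing P Γ₂ M (Ty.larrow S e T) false → Typing P Γ₁ N S e₂ →
      Typing P (GCtx.comma Γ₁ Γ₂) (Expr.lapp M N) T (e || e₂)
  | upair : ∀ (Γ₁ Γ₂ : Ctx α) (M N : Expr α) (S T : Ty α) (e₁ e₂ : Bool),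
      Typing P Γ₁ M S e₁ → Typing P Γ₂ N T e₂ →
      Typing P (GCtx.par Γ₁ Γ₂) (Expr.upair M N) (Ty.uprod S T) (e₁ || e₂)
  | opair : ∀ (Γ₁ Γ₂ : Ctx α) (M N : Expr α) (S T : Ty α) (e₁ e₂ : Bool),
      (Ty.Ord S → e₂ = false) →
      Typing P Γ₁ M S e₁ → Typing P Γ₂ N T e₂ →
      Typing P (GCtx.comma Γ₁ Γ₂) (Expr.opair M N) (Ty.oprod S T) (e₁ || e₂)
  | ulet : ∀ (G : CtxPat α) (Γ : Ctx α) (x y : ℕ) (M N : Expr α)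
        (S₁ S₂ T : Ty α) (e : Bool),
      x ≠ y → x ∉ vdom (GPat.fill G Γ) → y ∉ vdom (GPat.fill G Γ) →
      Typing P Γ M (Ty.uprod S₁ S₂) false →
      Typing P (GPat.fill G (GCtx.par (GCtx.bind (Binding.var x S₁))
        (GCtx.bind (Binding.var y S₂)))) N T e →
      Typing P (GPat.fill G Γ) (Expr.ulet x y M N) T e
  | olet : ∀ (G : CtxPat α) (Γ : Ctx α) (x y : ℕ) (M N : Expr α)
        (S₁ S₂ T : Ty α) (e : Bool),
      x ≠ y → x ∉ vdom (GPat.fill G Γ) → y ∉ vdom (GPat.fill G Γ) →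
      Typing P Γ M (Ty.oprod S₁ S₂) false →
      Typing P (GPat.fill G (GCtx.comma (GCtx.bind (Binding.var x S₁))
        (GCtx.bind (Binding.var y S₂)))) N T e →
      Typing P (GPat.fill G Γ) (Expr.olet x y M N) T e
  | weaken : ∀ (Γ₁ Γ₂ : Ctx α) (M : Expr α) (T : Ty α) (e₁ e₂ : Bool),
      Typing P Γ₁ M T e₁ → SubC Γ₂ Γ₁ → e₁ ≤ e₂ →
      Typing P Γ₂ M T e₂

/-! ## Heaps -/

structure Heap (α : Type) where
  find : ℕ → Option (ℕ × α × α)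
  fin : Set.Finite {l | find l ≠ none}

def Heap.dom {α : Type} (H : Heap α) : Set ℕ := {l | H.find l ≠ none}

def Heap.update {α : Type} (H : Heap α) (l : ℕ) (t : ℕ × α × α) : Heap α where
  find := fun l' => if l' = l then some t else H.find l'
  fin := by
    have hsub : {l' | (if l' = l then some t else H.find l') ≠ none} ⊆
        insert l {l' | H.find l' ≠ none} := by
      intro x hx
      by_cases h : x = l
      · exact Set.mem_insert_iff.mpr (Or.inl h)
      · refine Set.mem_insert_iff.mpr (Or.inr ?_)
        simp only [Set.mem_setOf_eq, if_neg h] at hx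
        exact hx
    exact Set.Finite.subset (Set.Finite.insert l H.fin) hsub

def Heap.erase {α : Type} (H : Heap α) (l : ℕ) : Heap α where
  find := fun l' => if l' = l then none else H.find l'
  fin := by
    apply Set.Finite.subset H.fin
    intro x hx
    simp only [Set.mem_setOf_eq] at hx ⊢
    by_cases h : x = l
    · rw [if_pos h] at hx; exact absurd rfl hx
    · rw [if_neg h] at hx; exact hx

def Heap.empty (α : Type) : Heap α :=
  ⟨fun _ => none, Set.Finite.subset Set.finite_empty (fun _ hx => (hx rfl).elim)⟩

/-! ## Reduction -/

/-- Expression reduction `M →β M'`. -/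
inductive BetaStep {α : Type} : Expr α → Expr α → Prop where
  | beta : ∀ (x : ℕ) (M V : Expr α), IsValue V →
      BetaStep (Expr.app (Expr.abs x M) V) (subst M V x)
  | ubeta : ∀ (x : ℕ) (M V : Expr α), IsValue V →
      BetaStep (Expr.uapp (Expr.uabs x M) V) (subst M V x)
  | rbeta : ∀ (x : ℕ) (M V : Expr α), IsValue V →
      BetaStep (Expr.rapp (Expr.rabs x M) V) (subst M V x)
  | lbeta : ∀ (x : ℕ) (M V : Expr α), IsValue V →
      BetaStep (Expr.lapp (Expr.labs x M) V) (subst M V x)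
  | uletv : ∀ (x y : ℕ) (M V₁ V₂ : Expr α), x ≠ y → IsValue V₁ → IsValue V₂ →
      BetaStep (Expr.ulet x y (Expr.upair V₁ V₂) M) (subst (subst M V₁ x) V₂ y)
  | oletv : ∀ (x y : ℕ) (M V₁ V₂ : Expr α), x ≠ y → IsValue V₁ → IsValue V₂ →
      BetaStep (Expr.olet x y (Expr.opair V₁ V₂) M) (subst (subst M V₁ x) V₂ y)

/-- Configuration reduction `M | ℋ →γ M' | ℋ'`. -/
inductive CfgStep {α : Type} (P : OPM α) : Expr α → Heap α → Expr α → Heap α → Prop where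
  | new : ∀ (H : Heap α) (l : ℕ) (m : α), l ∉ Heap.dom H →
      CfgStep P (Expr.app (Expr.const (Const.new m)) (Expr.const Const.unit)) H
        (Expr.loc l) (H.update l (0, m, P.eps))
  | op : ∀ (H : Heap α) (l n : ℕ) (m₀ m m' m'' : α),
      H.find l = some (n, m₀, m') → P.mul m' m = some m'' →
      (∃ m₃ : α, P.mulLe m'' m₃ m₀) →
      CfgStep P (Expr.app (Expr.const (Const.op m)) (Expr.loc l)) H
        (Expr.loc l) (H.update l (n, m₀, m''))
  | cl1 : ∀ (H : Heap α) (l n : ℕ) (m₀ m : α),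
      H.find l = some (n + 1, m₀, m) →
      CfgStep P (Expr.app (Expr.const Const.drop) (Expr.loc l)) H
        (Expr.const Const.unit) (H.update l (n, m₀, m))
  | cl2 : ∀ (H : Heap α) (l : ℕ) (m₀ m : α),
      H.find l = some (0, m₀, m) → P.le m m₀ →
      CfgStep P (Expr.app (Expr.const Const.drop) (Expr.loc l)) H
        (Expr.const Const.unit) (H.erase l)
  | sp : ∀ (H : Heap α) (l n : ℕ) (m₀ m m₁ m₂ : α),
      H.find l = some (n, m₀, m) →
      CfgStep P (Expr.app (Expr.const (Const.split m₁ m₂)) (Expr.loc l)) H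
        (Expr.opair (Expr.loc l) (Expr.loc l)) (H.update l (n + 1, m₀, m))

/-- Call-by-value evaluation contexts (left-to-right, except that
    `<`-applications evaluate right-to-left). -/
inductive ECtx (α : Type) : Type where
  | hole : ECtx α
  | appL : ECtx α → Expr α → ECtx α
  | appR : (V : Expr α) → IsValue V → ECtx α → ECtx α
  | uappL : ECtx α → Expr α → ECtx α
  | uappR : (V : Expr α) → IsValue V → ECtx α → ECtx α
  | rappL : ECtx α → Expr α → ECtx α
  | rappR : (V : Expr α) → IsValue V → ECtx α → ECtx α
  | lappL : ECtx α → (V : Expr α) → IsValue V → ECtx α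
  | lappR : Expr α → ECtx α → ECtx α
  | upairL : ECtx α → Expr α → ECtx α
  | upairR : (V : Expr α) → IsValue V → ECtx α → ECtx α
  | opairL : ECtx α → Expr α → ECtx α
  | opairR : (V : Expr α) → IsValue V → ECtx α → ECtx α
  | uletE : ℕ → ℕ → ECtx α → Expr α → ECtx α
  | oletE : ℕ → ℕ → ECtx α → Expr α → ECtx α

def ECtx.plug {α : Type} : ECtx α → Expr α → Expr α
  | .hole, M => M
  | .appL E N, M => Expr.app (E.plug M) N
  | .appR V _ E, M => Expr.app V (E.plug M)
  | .uappL E N, M => Expr.uapp (E.plug M) N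
  | .uappR V _ E, M => Expr.uapp V (E.plug M)
  | .rappL E N, M => Expr.rapp (E.plug M) N
  | .rappR V _ E, M => Expr.rapp V (E.plug M)
  | .lappL E V _, M => Expr.lapp (E.plug M) V
  | .lappR N E, M => Expr.lapp N (E.plug M)
  | .upairL E N, M => Expr.upair (E.plug M) N
  | .upairR V _ E, M => Expr.upair V (E.plug M)
  | .opairL E N, M => Expr.opair (E.plug M) N
  | .opairR V _ E, M => Expr.opair V (E.plug M)
  | .uletE x y E N, M => Expr.ulet x y (E.plug M) N
  | .oletE x y E N, M => Expr.olet x y (E.plug M) N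

/-- Contextual reduction `M | ℋ → M' | ℋ'`. -/
inductive Step {α : Type} (P : OPM α) : Expr α → Heap α → Expr α → Heap α → Prop where
  | exp : ∀ (E : ECtx α) (M M' : Expr α) (H : Heap α),
      BetaStep M M' → Step P (E.plug M) H (E.plug M') H
  | cfg : ∀ (E : ECtx α) (M M' : Expr α) (H H' : Heap α),
      CfgStep P M H M' H' → Step P (E.plug M) H (E.plug M') H'

/-! ## Run-time contexts, focus, heap typing -/

/-- Focus on location `l`: replace every binding of a location other than `l`
    by the empty context. -/
def focus {α : Type} : Ctx α → ℕ → Ctx α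
  | GCtx.empty, _ => GCtx.empty
  | GCtx.bind (Binding.loc l' m), l =>
      if l' = l then GCtx.bind (Binding.loc l' m) else GCtx.empty
  | GCtx.bind (Binding.var x T), _ => GCtx.bind (Binding.var x T)
  | GCtx.comma Γ₁ Γ₂, l => GCtx.comma (focus Γ₁ l) (focus Γ₂ l)
  | GCtx.par Γ₁ Γ₂, l => GCtx.par (focus Γ₁ l) (focus Γ₂ l)

/-- A run-time context is order-defined if every focus graph has a unique
    topological ordering. -/
def orderDefined {α : Type} (Γ : Ctx α) : Prop :=
  ∀ l : ℕ, Graph.Traceable (interpC (focus Γ l))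

def bUsage {α : Type} (P : OPM α) : Binding α → α
  | Binding.loc _ m => m
  | Binding.var _ _ => P.eps

def listProd {α : Type} (P : OPM α) : List α → Option α
  | [] => some P.eps
  | m :: ms => (listProd P ms).bind fun r => P.mul m r

/-- `focusUsage P Γ l u` : the usage projection of `⟨Γ⟩_l` is defined and
    equal to `u` (the ⊙-product of the usages along a topological ordering of
    the focus graph). -/
def focusUsage {α : Type} (P : OPM α) (Γ : Ctx α) (l : ℕ) (u : α) : Prop :=
  ∃ f : Equiv.Perm (Fin (interpC (focus Γ l)).n),
    Graph.IsTopOrder (interpC (focus Γ l)) f ∧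
      listProd P (List.ofFn fun k =>
        bUsage P ((interpC (focus Γ l)).label (f k).val)) = some u

/-- Heap typing `C ⊢ ℋ`. -/
def HeapTy {α : Type} (P : OPM α) (C : Ctx α) (H : Heap α) : Prop :=
  orderDefined C ∧
  ldom C = Heap.dom H ∧
  ∀ (l n : ℕ) (m₀ m : α), H.find l = some (n, m₀, m) →
    (interpC (focus C l)).n = n + 1 ∧
    ∃ u r : α, focusUsage P C l u ∧ P.mul m u = some r ∧ P.le r m₀

/-! ## Surface syntax -/

mutual
inductive SInf (α : Type) where
  | unit : SInf α
  | new : α → SInf α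
  | op : α → SInf α → SInf α
  | split : α → SInf α → SInf α
  | drop : SInf α → SInf α
  | var : ℕ → SInf α
  | app : SInf α → SInf α → SInf α
  | pair : SInf α → SInf α → SInf α
  | lett : ℕ → ℕ → SInf α → SInf α → SInf α
  | ann : SChk α → Ty α → SInf α

inductive SChk (α : Type) where
  | abs : ℕ → SChk α → SChk α
  | inf : SInf α → SChk α
end

/-! Free variables of surface expressions. -/

mutual
def fvI {α : Type} : SInf α → Set ℕ
  | SInf.unit => ∅
  | SInf.new _ => ∅
  | SInf.op _ a => fvI a
  | SInf.split _ a => fvI a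
  | SInf.drop a => fvI a
  | SInf.var x => {x}
  | SInf.app a b => fvI a ∪ fvI b
  | SInf.pair a b => fvI a ∪ fvI b
  | SInf.lett x y a b => fvI a ∪ (fvI b \ {x, y})
  | SInf.ann a _ => fvC a

def fvC {α : Type} : SChk α → Set ℕ
  | SChk.abs x a => fvC a \ {x}
  | SChk.inf a => fvI a
end

-- Context restriction `Γ↓_X`: replace each variable binding `x:T` with
-- `x ∉ X` by the empty context.
open Classical in
noncomputable def restrictC {α : Type} : Ctx α → Set ℕ → Ctx α
  | GCtx.empty, _ => GCtx.empty
  | GCtx.bind (Binding.var x T), X =>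
      if x ∈ X then GCtx.bind (Binding.var x T) else GCtx.empty
  | GCtx.bind (Binding.loc l m), _ => GCtx.bind (Binding.loc l m)
  | GCtx.comma Γ₁ Γ₂, X => GCtx.comma (restrictC Γ₁ X) (restrictC Γ₂ X)
  | GCtx.par Γ₁ Γ₂, X => GCtx.par (restrictC Γ₁ X) (restrictC Γ₂ X)

/-- Specification of the context decomposition `Γ⇓_X = (𝒢, Γ')`:
    `Γ ≲ 𝒢[Γ']`, the domain of `Γ'` is contained in `X`, and `X` is disjoint
    from the variables with ordered types in `𝒢`. -/
def DecompSpec {α : Type} (Γ : Ctx α) (X : Set ℕ) (G : CtxPat α) (Γ' : Ctx α) : Prop :=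
  SubC Γ (GPat.fill G Γ') ∧ vdom Γ' ⊆ X ∧
    ∀ x T, Binding.var x T ∈ GCtx.toList (GPat.fill G GCtx.empty) → Ty.Ord T → x ∉ X

/-! ## Bidirectional algorithmic typing (Figures 8–10): inference `↑` and
    checking `↓`, elaborating surface expressions into internal terms. -/

mutual
inductive Infer {α : Type} (P : OPM α) : Ctx α → SInf α → Ty α → Bool → Expr α → Prop where
  | unit : ∀ Γ : Ctx α, SubC Γ GCtx.empty →
      Infer P Γ SInf.unit Ty.unit false (Expr.const Const.unit)
  | new : ∀ (Γ : Ctx α) (m : α), SubC Γ GCtx.empty →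
      Infer P Γ (SInf.new m) (Ty.res m) false
        (Expr.app (Expr.const (Const.new m)) (Expr.const Const.unit))
  | op : ∀ (Γ : Ctx α) (a : SInf α) (m m₁ m₂ : α) (e : Bool) (M : Expr α),
      Infer P Γ a (Ty.res m) e M → P.mulLe m₁ m₂ m →
      Infer P Γ (SInf.op m₁ a) (Ty.res m₂) true
        (Expr.app (Expr.const (Const.op m₁)) M)
  | split : ∀ (Γ : Ctx α) (a : SInf α) (m m₁ m₂ : α) (e : Bool) (M : Expr α),
      Infer P Γ a (Ty.res m) e M → P.mulLe m₁ m₂ m →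
      Infer P Γ (SInf.split m₁ a) (Ty.oprod (Ty.res m₁) (Ty.res m₂)) e
        (Expr.app (Expr.const (Const.split m₁ m₂)) M)
  | drop : ∀ (Γ : Ctx α) (a : SInf α) (m : α) (e : Bool) (M : Expr α),
      Infer P Γ a (Ty.res m) e M → P.le P.eps m →
      Infer P Γ (SInf.drop a) Ty.unit e (Expr.app (Expr.const Const.drop) M)
  | var : ∀ (Γ : Ctx α) (x : ℕ) (T : Ty α),
      SubC Γ (GCtx.bind (Binding.var x T)) →
      Infer P Γ (SInf.var x) T false (Expr.var x)
  | app : ∀ (Γ Γ₁ Γ₂ : Ctx α) (a₁ a₂ : SInf α) (S T : Ty α)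
        (e e₁ e₂ : Bool) (M N : Expr α),
      Γ₁ = restrictC Γ (fvI a₁) → Γ₂ = restrictC Γ (fvI a₂) →
      SubC Γ (GCtx.comma Γ₁ Γ₂) →
      Infer P Γ₁ a₁ (Ty.arrow S e T) e₁ M → Infer P Γ₂ a₂ S e₂ N →
      Infer P Γ (SInf.app a₁ a₂) T (e || e₁ || e₂) (Expr.app M N)
  | uapp : ∀ (Γ Γ₁ Γ₂ : Ctx α) (a₁ a₂ : SInf α) (S T : Ty α)
        (e e₁ e₂ : Bool) (M N : Expr α),
      Γ₁ = restrictC Γ (fvI a₁) → Γ₂ = restrictC Γ (fvI a₂) →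
      SubC Γ (GCtx.par Γ₁ Γ₂) →
      Infer P Γ₁ a₁ (Ty.uarrow S e T) e₁ M → Infer P Γ₂ a₂ S e₂ N →
      Infer P Γ (SInf.app a₁ a₂) T (e || e₁ || e₂) (Expr.uapp M N)
  | rapp : ∀ (Γ Γ₁ Γ₂ : Ctx α) (a₁ a₂ : SInf α) (S T : Ty α)
        (e e₁ : Bool) (M N : Expr α),
      Γ₁ = restrictC Γ (fvI a₁) → Γ₂ = restrictC Γ (fvI a₂) →
      SubC Γ (GCtx.comma Γ₁ Γ₂) →
      Infer P Γ₁ a₁ (Ty.rarrow S e T) e₁ M → Infer P Γ₂ a₂ S false N →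
      Infer P Γ (SInf.app a₁ a₂) T (e || e₁) (Expr.rapp M N)
  | lapp : ∀ (Γ Γ₁ Γ₂ : Ctx α) (a₁ a₂ : SInf α) (S T : Ty α)
        (e e₂ : Bool) (M N : Expr α),
      Γ₁ = restrictC Γ (fvI a₁) → Γ₂ = restrictC Γ (fvI a₂) →
      SubC Γ (GCtx.comma Γ₂ Γ₁) →
      Infer P Γ₁ a₁ (Ty.larrow S e T) false M → Infer P Γ₂ a₂ S e₂ N →
      Infer P Γ (SInf.app a₁ a₂) T (e || e₂) (Expr.lapp M N)
  | upair : ∀ (Γ Γ₁ Γ₂ : Ctx α) (a₁ a₂ : SInf α) (S T : Ty α)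
        (e₁ e₂ : Bool) (M N : Expr α),
      Γ₁ = restrictC Γ (fvI a₁) → Γ₂ = restrictC Γ (fvI a₂) →
      SubC Γ (GCtx.par Γ₁ Γ₂) →
      Infer P Γ₁ a₁ S e₁ M → Infer P Γ₂ a₂ T e₂ N →
      Infer P Γ (SInf.pair a₁ a₂) (Ty.uprod S T) (e₁ || e₂) (Expr.upair M N)
  | opair : ∀ (Γ Γ₁ Γ₂ : Ctx α) (a₁ a₂ : SInf α) (S T : Ty α)
        (e₁ e₂ : Bool) (M N : Expr α),
      Γ₁ = restrictC Γ (fvI a₁) → Γ₂ = restrictC Γ (fvI a₂) →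
      SubC Γ (GCtx.comma Γ₁ Γ₂) → ¬ SubC Γ (GCtx.par Γ₁ Γ₂) →
      (Ty.Ord S → e₂ = false) →
      Infer P Γ₁ a₁ S e₁ M → Infer P Γ₂ a₂ T e₂ N →
      Infer P Γ (SInf.pair a₁ a₂) (Ty.oprod S T) (e₁ || e₂) (Expr.opair M N)
  | ulet : ∀ (Γ Γ' : Ctx α) (G : CtxPat α) (x y : ℕ) (a₁ a₂ : SInf α)
        (S₁ S₂ T : Ty α) (e : Bool) (M N : Expr α),
      DecompSpec Γ (fvI a₁) G Γ' →
      x ≠ y → x ∉ vdom (GPat.fill G Γ') → y ∉ vdom (GPat.fill G Γ') →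
      Infer P Γ' a₁ (Ty.uprod S₁ S₂) false M →
      Infer P (GPat.fill G (GCtx.par (GCtx.bind (Binding.var x S₁))
        (GCtx.bind (Binding.var y S₂)))) a₂ T e N →
      Infer P Γ (SInf.lett x y a₁ a₂) T e (Expr.ulet x y M N)
  | olet : ∀ (Γ Γ' : Ctx α) (G : CtxPat α) (x y : ℕ) (a₁ a₂ : SInf α)
        (S₁ S₂ T : Ty α) (e : Bool) (M N : Expr α),
      DecompSpec Γ (fvI a₁) G Γ' →
      x ≠ y → x ∉ vdom (GPat.fill G Γ') → y ∉ vdom (GPat.fill G Γ') →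
      Infer P Γ' a₁ (Ty.oprod S₁ S₂) false M →
      Infer P (GPat.fill G (GCtx.comma (GCtx.bind (Binding.var x S₁))
        (GCtx.bind (Binding.var y S₂)))) a₂ T e N →
      Infer P Γ (SInf.lett x y a₁ a₂) T e (Expr.olet x y M N)
  | ann : ∀ (Γ : Ctx α) (a : SChk α) (T : Ty α) (e : Bool) (M : Expr α),
      Check P Γ a T e M →
      Infer P Γ (SInf.ann a T) T e M

inductive Check {α : Type} (P : OPM α) : Ctx α → SChk α → Ty α → Bool → Expr α → Prop where
  | abs : ∀ (Γ : Ctx α) (x : ℕ) (a : SChk α) (S T : Ty α) (e₁ e₂ : Bool) (M : Expr α),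
      isUnrCtx Γ → x ∉ vdom Γ →
      Check P (GCtx.comma Γ (GCtx.bind (Binding.var x S))) a T e₁ M → e₁ ≤ e₂ →
      Check P Γ (SChk.abs x a) (Ty.arrow S e₂ T) false (Expr.abs x M)
  | uabs : ∀ (Γ : Ctx α) (x : ℕ) (a : SChk α) (S T : Ty α) (e₁ e₂ : Bool) (M : Expr α),
      x ∉ vdom Γ →
      Check P (GCtx.par Γ (GCtx.bind (Binding.var x S))) a T e₁ M → e₁ ≤ e₂ →
      Check P Γ (SChk.abs x a) (Ty.uarrow S e₂ T) false (Expr.uabs x M)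
  | rabs : ∀ (Γ : Ctx α) (x : ℕ) (a : SChk α) (S T : Ty α) (e₁ e₂ : Bool) (M : Expr α),
      x ∉ vdom Γ →
      Check P (GCtx.comma Γ (GCtx.bind (Binding.var x S))) a T e₁ M → e₁ ≤ e₂ →
      Check P Γ (SChk.abs x a) (Ty.rarrow S e₂ T) false (Expr.rabs x M)
  | labs : ∀ (Γ : Ctx α) (x : ℕ) (a : SChk α) (S T : Ty α) (e₁ e₂ : Bool) (M : Expr α),
      x ∉ vdom Γ →
      Check P (GCtx.comma (GCtx.bind (Binding.var x S)) Γ) a T e₁ M → e₁ ≤ e₂ →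
      Check P Γ (SChk.abs x a) (Ty.larrow S e₂ T) false (Expr.labs x M)
  | inf : ∀ (Γ : Ctx α) (a : SInf α) (S T : Ty α) (e : Bool) (M : Expr α),
      Infer P Γ a S e M → S = T →
      Check P Γ (SChk.inf a) T e M
end


/-! ## Auxiliary lemmas for soundness -/

theorem graphIsoRefl {B : Type} (G : Graph B) : Graph.Iso G G :=
  ⟨rfl, id, Function.bijective_id, fun _ _ => Iff.rfl, fun _ => rfl⟩

theorem subCRefl {α : Type} (Γ : Ctx α) : SubC Γ Γ :=
  ⟨⟨interpC Γ, interpC Γ, graphIsoRefl _, ⟨rfl, fun _ _ => rfl, fun _ _ h => h⟩,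
    graphIsoRefl _⟩, fun _ h => h⟩

theorem subCEmpty2 {α : Type} : SubC (GCtx.empty : Ctx α) (GCtx.comma GCtx.empty GCtx.empty) := by
  constructor
  · refine ⟨interpC (GCtx.empty : Ctx α), interpC (GCtx.empty : Ctx α), graphIsoRefl _,
      ⟨rfl, fun _ _ => rfl, fun _ _ h => h⟩, ?_⟩
    exact ⟨rfl, id, Function.bijective_id, fun i => i.elim0, fun i => i.elim0⟩
  · intro x hx
    simp [unrSetC, GCtx.unrSet] at hx

theorem isoJoinZeroLeft {B : Type} [Inhabited B] (G : Graph B) :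
    Graph.Iso G ((Graph.zero B).join G) := by
  refine ⟨(Nat.zero_add G.n).symm, id, Function.bijective_id, ?_, ?_⟩
  · intro i j
    simp [Graph.join, Graph.zero]
  · intro i
    simp [Graph.join, Graph.zero]

theorem subCCommaEmptyLeft {α : Type} (Γ : Ctx α) : SubC Γ (GCtx.comma GCtx.empty Γ) := by
  constructor
  · exact ⟨interpC Γ, interpC Γ, graphIsoRefl _, ⟨rfl, fun _ _ => rfl, fun _ _ h => h⟩,
      isoJoinZeroLeft _⟩
  · intro x hx
    simp only [unrSetC, GCtx.unrSet, Set.mem_union, Set.mem_empty_iff_false, false_or] at hx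
    exact hx

mutual

theorem infSound {α : Type} (P : OPM α) :
    ∀ {Γ : Ctx α} {a : SInf α} {T : Ty α} {e : Bool} {M : Expr α},
      Infer P Γ a T e M → Typing P Γ M T e
  | _, _, _, _, _, .unit Γ hs =>
      Typing.weaken _ _ _ _ _ _ Typing.unit hs (le_refl _)
  | _, _, _, _, _, .new Γ m hs =>
      Typing.weaken _ _ _ _ _ _
        (Typing.weaken _ _ _ _ _ _
          (Typing.app _ _ _ _ _ _ false false false (Typing.new m) Typing.unit)
          subCEmpty2 (le_refl _)) hs (le_refl _)
  | _, _, _, _, _, .op Γ a m m₁ m₂ e M h hmul =>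
      Typing.weaken _ _ _ _ _ _
        (Typing.app _ _ _ _ _ _ true false e (Typing.op m m₁ m₂ hmul) (infSound P h))
        (subCCommaEmptyLeft Γ) (le_refl _)
  | _, _, _, _, _, .split Γ a m m₁ m₂ e M h hmul =>
      Typing.weaken _ _ _ _ _ _
        (Typing.app _ _ _ _ _ _ false false e (Typing.split m m₁ m₂ hmul) (infSound P h))
        (subCCommaEmptyLeft Γ) (le_refl _)
  | _, _, _, _, _, .drop Γ a m e M h hle =>
      Typing.weaken _ _ _ _ _ _
        (Typing.app _ _ _ _ _ _ false false e (Typing.drop m hle) (infSound P h))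
        (subCCommaEmptyLeft Γ) (le_refl _)
  | _, _, _, _, _, .var Γ x T hs =>
      Typing.weaken _ _ _ _ _ _ (Typing.var x T) hs (le_refl _)
  | _, _, _, _, _, .app Γ Γ₁ Γ₂ a₁ a₂ S T e e₁ e₂ M N _ _ hs h1 h2 =>
      Typing.weaken _ _ _ _ _ _
        (Typing.app _ _ _ _ _ _ _ _ _ (infSound P h1) (infSound P h2)) hs (le_refl _)
  | _, _, _, _, _, .uapp Γ Γ₁ Γ₂ a₁ a₂ S T e e₁ e₂ M N _ _ hs h1 h2 =>
      Typing.weaken _ _ _ _ _ _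
        (Typing.uapp _ _ _ _ _ _ _ _ _ (infSound P h1) (infSound P h2)) hs (le_refl _)
  | _, _, _, _, _, .rapp Γ Γ₁ Γ₂ a₁ a₂ S T e e₁ M N _ _ hs h1 h2 =>
      Typing.weaken _ _ _ _ _ _
        (Typing.rapp _ _ _ _ _ _ _ _ (infSound P h1) (infSound P h2)) hs (le_refl _)
  | _, _, _, _, _, .lapp Γ Γ₁ Γ₂ a₁ a₂ S T e e₂ M N _ _ hs h1 h2 =>
      Typing.weaken _ _ _ _ _ _
        (Typing.lapp Γ₂ Γ₁ M N S T e e₂ (infSound P h1) (infSound P h2)) hs (le_refl _)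
  | _, _, _, _, _, .upair Γ Γ₁ Γ₂ a₁ a₂ S T e₁ e₂ M N _ _ hs h1 h2 =>
      Typing.weaken _ _ _ _ _ _
        (Typing.upair _ _ _ _ _ _ _ _ (infSound P h1) (infSound P h2)) hs (le_refl _)
  | _, _, _, _, _, .opair Γ Γ₁ Γ₂ a₁ a₂ S T e₁ e₂ M N _ _ hs _ hOrd h1 h2 =>
      Typing.weaken _ _ _ _ _ _
        (Typing.opair _ _ _ _ _ _ _ _ hOrd (infSound P h1) (infSound P h2)) hs (le_refl _)
  | _, _, _, _, _, .ulet Γ Γ' G x y a₁ a₂ S₁ S₂ T e M N hdec hxy hx hy h1 h2 =>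
      Typing.weaken _ _ _ _ _ _
        (Typing.ulet G Γ' x y M N S₁ S₂ T e hxy hx hy (infSound P h1) (infSound P h2))
        hdec.1 (le_refl _)
  | _, _, _, _, _, .olet Γ Γ' G x y a₁ a₂ S₁ S₂ T e M N hdec hxy hx hy h1 h2 =>
      Typing.weaken _ _ _ _ _ _
        (Typing.olet G Γ' x y M N S₁ S₂ T e hxy hx hy (infSound P h1) (infSound P h2))
        hdec.1 (le_refl _)
  | _, _, _, _, _, .ann Γ a T e M h => chkSound P h

theorem chkSound {α : Type} (P : OPM α) :
    ∀ {Γ : Ctx α} {a : SChk α} {T : Ty α} {e : Bool} {M : Expr α},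
      Check P Γ a T e M → Typing P Γ M T e
  | _, _, _, _, _, .abs Γ x a S T e₁ e₂ M hunr hx h hle =>
      Typing.abs Γ x S T M e₂ hx hunr
        (Typing.weaken _ _ _ _ _ _ (chkSound P h) (subCRefl _) hle)
  | _, _, _, _, _, .uabs Γ x a S T e₁ e₂ M hx h hle =>
      Typing.uabs Γ x S T M e₂ hx
        (Typing.weaken _ _ _ _ _ _ (chkSound P h) (subCRefl _) hle)
  | _, _, _, _, _, .rabs Γ x a S T e₁ e₂ M hx h hle =>
      Typing.rabs Γ x S T M e₂ hx
        (Typing.weaken _ _ _ _ _ _ (chkSound P h) (subCRefl _) hle)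
  | _, _, _, _, _, .labs Γ x a S T e₁ e₂ M hx h hle =>
      Typing.labs Γ x S T M e₂ hx
        (Typing.weaken _ _ _ _ _ _ (chkSound P h) (subCRefl _) hle)
  | _, _, _, _, _, .inf Γ a S T e M h hST => hST ▸ infSound P h

end

/-- **Soundness of algorithmic typing.** If the algorithmic inference
judgment `Γ ⊢ a ↑ T | e ⇝ M` or the algorithmic checking judgment
`Γ ⊢ a ↓ T | e ⇝ M` holds, then the declarative typing judgment
`Γ ⊢ M : T | e` holds for the elaborated internal expression `M`. -/
theorem algorithmic_typing_sound {α : Type} (P : OPM α) :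
    (∀ (Γ : Ctx α) (a : SInf α) (T : Ty α) (e : Bool) (M : Expr α),
        Infer P Γ a T e M → Typing P Γ M T e) ∧
    (∀ (Γ : Ctx α) (a : SChk α) (T : Ty α) (e : Bool) (M : Expr α),
        Check P Γ a T e M → Typing P Γ M T e) :=
  ⟨fun _ _ _ _ _ h => infSound P h, fun _ _ _ _ _ h => chkSound P h⟩

end LawOrder
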